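/- arXiv:1107.4427 — 4 statements merged into one kernel-verified Lean document; each statement's English description precedes it below -/
import Mathlib

section
/- Let A be the (n+1)-dimensional n-ary algebra of type (B_1) over a field F (only nonzero basic product [e_2,...,e_{n+1}] = e_1). Then any linear map φ defined by φ(e_1) = δ·(Σ_{k=2}^{n+1} β_{kk})·e_1 and φ(e_i) = Σ_{j=1}^{n+1} β_{ij} e_j for 2 ≤ i ≤ n+1 (for arbitrary scalars β_{ij}) is a δ-derivation of A. -/
/-!
Let `e₁ = b 0`. The table of `br` says `br x = det_b (e₁, x) • e₁`. For any endomorphism `φ`,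
`f ↦ (x ↦ ∑ᵢ f (x₁, …, φ xᵢ, …, xₙ))` maps alternating forms to alternating forms, so on
top-degree forms it acts by a scalar, namely `tr φ`. Splitting off the `e₁` slot, the right-hand side of the identity is
`δ (tr φ - δS) det_b (e₁, x) • e₁ = δ S det_b (e₁, x) • e₁`, where `S = ∑_{k ≥ 2} β_kk` and
`tr φ = δS + S`; the left-hand side is `det_b (e₁, x) • φ e₁ = δ S det_b (e₁, x) • e₁`.
-/

open Function

theorem MultilinearMap.compLinearMap_update_id_apply {R M N ι : Type*} [CommSemiring R]
    [AddCommMonoid M] [AddCommMonoid N] [Module R M] [Module R N] [DecidableEq ι]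
    (f : MultilinearMap R (fun _ : ι => M) N) (φ : M →ₗ[R] M) (i : ι) (x : ι → M) :
    f.compLinearMap (update (fun _ => LinearMap.id) i φ) x = f (update x i (φ (x i))) := by
  rw [MultilinearMap.compLinearMap_apply]
  congr 1
  ext j
  rcases eq_or_ne j i with rfl | h <;> simp [*]

namespace AlternatingMap

section

variable {R M N ι : Type*} [CommSemiring R] [AddCommMonoid M] [AddCommGroup N] [Module R M]
  [Module R N] [Fintype ι] [DecidableEq ι]

/-- The derivative at `t = 0` of `f.compLinearMap (1 + t • φ)`. -/
def compLinearMapDeriv (f : M [⋀^ι]→ₗ[R] N) (φ : M →ₗ[R] M) : M [⋀^ι]→ₗ[R] N where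
  toMultilinearMap :=
    ∑ i, f.toMultilinearMap.compLinearMap (update (fun _ => LinearMap.id) i φ)
  map_eq_zero_of_eq' x i j hx hij := by
    simp only [MultilinearMap.toFun_eq_coe, sum_apply,
      MultilinearMap.compLinearMap_update_id_apply, coe_multilinearMap]
    have hswap : update x j (φ (x j)) ∘ Equiv.swap i j = update x i (φ (x i)) := by
      rw [update_comp_equiv, Equiv.comp_swap_eq_update, Equiv.symm_swap, Equiv.swap_apply_right,
        hx, update_eq_self, update_idem]
    rw [Fintype.sum_eq_add i j hij fun k hk => f.map_eq_zero_of_eq _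
      (by rw [update_of_ne hk.1.symm, update_of_ne hk.2.symm, hx]) hij,
      ← hswap, f.map_swap _ hij, neg_add_cancel]

theorem compLinearMapDeriv_apply (f : M [⋀^ι]→ₗ[R] N) (φ : M →ₗ[R] M) (x : ι → M) :
    f.compLinearMapDeriv φ x = ∑ i, f (update x i (φ (x i))) := by
  simp only [compLinearMapDeriv, ← coe_multilinearMap, sum_apply,
    MultilinearMap.compLinearMap_update_id_apply]

theorem curryLeft_compLinearMapDeriv {n : ℕ} (f : M [⋀^Fin (n + 1)]→ₗ[R] N) (φ : M →ₗ[R] M)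
    (v₀ : M) :
    (f.curryLeft v₀).compLinearMapDeriv φ =
      (f.compLinearMapDeriv φ).curryLeft v₀ - f.curryLeft (φ v₀) := by
  ext x
  simp [compLinearMapDeriv_apply, Fin.sum_univ_succ, Matrix.vecCons, Fin.cons_update]

end

theorem smulRight_compLinearMapDeriv {R M N ι : Type*} [CommRing R] [AddCommMonoid M]
    [AddCommGroup N] [Module R M] [Module R N] [Fintype ι] [DecidableEq ι]
    (f : M [⋀^ι]→ₗ[R] R) (z : N) (φ : M →ₗ[R] M) :
    (f.smulRight z).compLinearMapDeriv φ = (f.compLinearMapDeriv φ).smulRight z := by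
  ext x
  simp [compLinearMapDeriv_apply, Finset.sum_smul]

end AlternatingMap

theorem Fin.exists_succAbove_comp_perm_of_injective {n : ℕ} {v : Fin n → Fin (n + 1)}
    (hv : Injective v) : ∃ (i : Fin (n + 1)) (σ : Equiv.Perm (Fin n)), v = i.succAbove ∘ σ := by
  obtain ⟨i, hi⟩ : ∃ i, ∀ k, v k ≠ i := by
    by_contra! h
    simpa using Fintype.card_le_of_surjective v h
  choose σ hσ using fun k => Fin.exists_succAbove_eq (hi k)
  have hσ_inj : Injective σ := fun a c h => hv (by rw [← hσ a, ← hσ c, h])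
  exact ⟨i, Equiv.ofBijective σ (Finite.injective_iff_bijective.1 hσ_inj),
    funext fun k => (hσ k).symm⟩

theorem Module.Basis.ext_alternating_succAbove {R M N : Type*} [CommSemiring R]
    [AddCommMonoid M] [AddCommGroup N] [Module R M] [Module R N] {n : ℕ}
    (b : Module.Basis (Fin (n + 1)) R M) {f g : M [⋀^Fin n]→ₗ[R] N}
    (h : ∀ i : Fin (n + 1), f (b ∘ i.succAbove) = g (b ∘ i.succAbove)) : f = g := by
  refine b.ext_alternating fun v hv => ?_
  obtain ⟨i, σ, rfl⟩ := Fin.exists_succAbove_comp_perm_of_injective hv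
  change f ((b ∘ i.succAbove) ∘ σ) = g ((b ∘ i.succAbove) ∘ σ)
  rw [f.map_perm, g.map_perm, h]

section

variable {R M ι : Type*} [CommRing R] [AddCommGroup M] [Module R M] [Fintype ι] [DecidableEq ι]

theorem LinearMap.trace_eq_sum_repr (b : Module.Basis ι R M) (φ : M →ₗ[R] M) :
    LinearMap.trace R M φ = ∑ i, b.repr (φ (b i)) i := by
  simp [LinearMap.trace_eq_matrix_trace R b, Matrix.trace, LinearMap.toMatrix_apply]

namespace Module.Basis

theorem det_update_self (b : Module.Basis ι R M) (i : ι) (w : M) :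
    b.det (update b i w) = b.repr w i := by
  change b.det.toMultilinearMap.toLinearMap b i w = b.coord i w
  congr 1
  refine b.ext fun j => ?_
  rcases eq_or_ne j i with rfl | hji
  · simp [update_eq_self, det_self]
  · simp only [MultilinearMap.toLinearMap_apply, coord_apply, repr_self, Finsupp.single_apply,
      if_neg hji]
    exact b.det.map_eq_zero_of_eq _ (by simp [hji]) hji

/-- Jacobi's formula. -/
theorem det_compLinearMapDeriv (b : Module.Basis ι R M) (φ : M →ₗ[R] M) :
    b.det.compLinearMapDeriv φ = LinearMap.trace R M φ • b.det := by
  rw [AlternatingMap.eq_smul_basis_det b (b.det.compLinearMapDeriv φ),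
    AlternatingMap.compLinearMapDeriv_apply, LinearMap.trace_eq_sum_repr b]
  simp only [det_update_self]

end Module.Basis

end

theorem AlternatingMap.eq_smulRight_det_curryLeft {R M N : Type*} [CommRing R] [AddCommGroup M]
    [AddCommGroup N] [Module R M] [Module R N] {n : ℕ} (b : Module.Basis (Fin (n + 1)) R M)
    (f : M [⋀^Fin n]→ₗ[R] N) (z : N)
    (hf : ∀ i : Fin (n + 1), f (b ∘ i.succAbove) = if i = 0 then z else 0) :
    f = (b.det.curryLeft (b 0)).smulRight z := by
  refine b.ext_alternating_succAbove fun i => ?_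
  rw [hf, smulRight_apply, curryLeft_apply_apply]
  split_ifs with hi
  · subst hi
    rw [Fin.succAbove_zero, Matrix.vecCons, show Fin.cons (b 0) (b ∘ Fin.succ) = b from
      Fin.cons_self_tail _, b.det_self, one_smul]
  · obtain ⟨j, hj⟩ := Fin.exists_succAbove_eq (Ne.symm hi)
    rw [b.det.map_eq_zero_of_eq _ (by simp [hj]) (Fin.succ_ne_zero j).symm, zero_smul]

theorem B1_map_is_delta_derivation_general
    {F A : Type*} [Field F] [AddCommGroup A] [Module F A] {n : ℕ}
    (b : Module.Basis (Fin (n + 1)) F A)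
    (br : AlternatingMap F A A (Fin n))
    (hbr : ∀ i : Fin (n + 1),
      br (b ∘ i.succAbove) = if i = 0 then b 0 else 0)
    (δ : F) (β : Fin (n + 1) → Fin (n + 1) → F)
    (φ : A →ₗ[F] A)
    (hφ : φ = b.constr F (fun i : Fin (n + 1) =>
      if i = 0 then
        (δ * ∑ k ∈ Finset.univ.erase (0 : Fin (n + 1)), β k k) • b 0
      else ∑ j, β i j • b j)) :
    ∀ x : Fin n → A,
      φ (br x) = δ • ∑ i, br (Function.update x i (φ (x i))) := by
  intro x
  set S := ∑ k ∈ Finset.univ.erase (0 : Fin (n + 1)), β k k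
  have hφ0 : φ (b 0) = (δ * S) • b 0 := by rw [hφ, Module.Basis.constr_basis, if_pos rfl]
  have htrace : LinearMap.trace F A φ = δ * S + S := by
    rw [LinearMap.trace_eq_sum_repr b, ← Finset.add_sum_erase _ _ (Finset.mem_univ 0)]
    refine congrArg₂ (· + ·) (by simp [hφ0]) (Finset.sum_congr rfl fun k hk => ?_)
    rw [hφ, Module.Basis.constr_basis, if_neg (Finset.ne_of_mem_erase hk)]
    simp [Finsupp.single_apply]
  have hc : (b.det.curryLeft (b 0)).compLinearMapDeriv φ = S • b.det.curryLeft (b 0) := by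
    rw [AlternatingMap.curryLeft_compLinearMapDeriv, b.det_compLinearMapDeriv, htrace, hφ0,
      map_smul, AlternatingMap.curryLeft_smul, LinearMap.smul_apply, ← sub_smul,
      add_sub_cancel_left]
  rw [← br.compLinearMapDeriv_apply, AlternatingMap.eq_smulRight_det_curryLeft b br (b 0) hbr,
    AlternatingMap.smulRight_compLinearMapDeriv, hc, AlternatingMap.smulRight_apply,
    AlternatingMap.smulRight_apply, AlternatingMap.smul_apply, map_smul, hφ0]
  module

/-- Type `(B_1)`: any linear map given by
`φ(e_1) = δ·(Σ_{k=2}^{n+1} β_{kk})·e_1`, `φ(e_i) = Σ_j β_{ij} e_j` (`i ≥ 2`)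
is a `δ`-derivation. -/
theorem B1_map_is_delta_derivation
    {F A : Type*} [Field F] [AddCommGroup A] [Module F A] {n : ℕ} (hn : 2 ≤ n)
    (b : Module.Basis (Fin (n + 1)) F A)
    (br : AlternatingMap F A A (Fin n))
    (hbr : ∀ i : Fin (n + 1),
      br (b ∘ i.succAbove) = if i = 0 then b 0 else 0)
    (δ : F) (β : Fin (n + 1) → Fin (n + 1) → F)
    (φ : A →ₗ[F] A)
    (hφ : φ = b.constr F (fun i : Fin (n + 1) =>
      if i = 0 then
        (δ * ∑ k ∈ Finset.univ.erase (0 : Fin (n + 1)), β k k) • b 0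
      else ∑ j, β i j • b j)) :
    ∀ x : Fin n → A,
      φ (br x) = δ • ∑ i, br (Function.update x i (φ (x i))) :=
  B1_map_is_delta_derivation_general b br hbr δ β φ hφ
end

section
/- Let A be the (n+1)-dimensional n-ary algebra of type (B_2) over a field F with δ ∈ F, δ ≠ 1. Then the linear map φ defined by φ(e_1) = (δ/(1-δ))·(Σ_{k=2}^n β_{kk})·e_1, φ(e_{n+1}) = β_{n+1,n+1}·e_{n+1}, and φ(e_i) = Σ_{j=1}^{n+1} β_{ij} e_j for 2 ≤ i ≤ n (arbitrary scalars β_{ij}) is a δ-derivation of A. -/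
/-!
Both sides of the `δ`-derivation identity are alternating in `x`, so it suffices to compare them
on the tuples of all basis vectors but one, `e ∘ m.succAbove`. Replacing the entry `e_j` of such
a tuple by `φ e_j` leaves only the coefficients of `e_j` and of the missing vector `e_m`, and for
the bracket of type `(B_2)` the latter never contribute. So the right side is
`δ (φ_11 + ⋯ + φ_nn) [e_1, …, e_n]`, which equals `φ e_1 = φ_11 e_1` exactly because
`φ_11 (1 - δ) = δ (β_22 + ⋯ + β_nn)`.
-/

open Function Finset

theorem Fin.exists_perm_eq_succAbove_comp {n : ℕ} {v : Fin n → Fin (n + 1)}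
    (hv : Injective v) {m : Fin (n + 1)} (hm : ∀ k, v k ≠ m) :
    ∃ e : Equiv.Perm (Fin n), v = m.succAbove ∘ e := by
  choose g hg using fun k ↦ Fin.exists_succAbove_eq (hm k)
  have hg_inj : Injective g := fun k l hkl ↦ hv (by rw [← hg k, ← hg l, hkl])
  exact ⟨.ofBijective g hg_inj.bijective_of_finite, funext fun k ↦ (hg k).symm⟩

namespace AlternatingMap

section leibniz

variable {R M N ι : Type*} [CommRing R] [AddCommGroup M] [Module R M] [AddCommGroup N]
  [Module R N] [Fintype ι] [DecidableEq ι]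

theorem sum_map_update_eq_zero_of_eq (f : M [⋀^ι]→ₗ[R] N) (φ : M →ₗ[R] M) {x : ι → M}
    {i j : ι} (hx : x i = x j) (hij : i ≠ j) :
    ∑ k, f (update x k (φ (x k))) = 0 := by
  have hswap : update x j (φ (x j)) = update x i (φ (x i)) ∘ Equiv.swap i j := by
    rw [update_comp_equiv, Equiv.symm_swap, Equiv.swap_apply_left, hx]
    congr 1
    ext k
    rcases eq_or_ne k i with rfl | hki
    · simp [hx]
    rcases eq_or_ne k j with rfl | hkj
    · simp [hx]
    · simp [Equiv.swap_apply_of_ne_of_ne hki hkj]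
  rw [Fintype.sum_eq_add i j hij, hswap, f.map_swap _ hij, add_neg_cancel]
  rintro k ⟨hki, hkj⟩
  exact f.map_eq_zero_of_eq _ (by simp [update_of_ne hki.symm, update_of_ne hkj.symm, hx]) hij

theorem _root_.MultilinearMap.sum_compLinearMap_update_apply
    (f : MultilinearMap R (fun _ : ι ↦ M) N) (φ : M →ₗ[R] M) (x : ι → M) :
    (∑ i, f.compLinearMap (update (fun _ ↦ .id) i φ)) x = ∑ i, f (update x i (φ (x i))) := by
  simp only [_root_.sum_apply, MultilinearMap.compLinearMap_apply]
  refine sum_congr rfl fun k _ ↦ congrArg f (funext fun l ↦ ?_)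
  rcases eq_or_ne l k with rfl | hl <;> simp [*]

def leibnizSum (f : M [⋀^ι]→ₗ[R] N) (φ : M →ₗ[R] M) : M [⋀^ι]→ₗ[R] N where
  toMultilinearMap := ∑ i, f.toMultilinearMap.compLinearMap (update (fun _ ↦ .id) i φ)
  map_eq_zero_of_eq' x i j hx hij := by
    rw [MultilinearMap.toFun_eq_coe, MultilinearMap.sum_compLinearMap_update_apply]
    exact f.sum_map_update_eq_zero_of_eq φ hx hij

theorem leibnizSum_apply (f : M [⋀^ι]→ₗ[R] N) (φ : M →ₗ[R] M) (x : ι → M) :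
    f.leibnizSum φ x = ∑ i, f (update x i (φ (x i))) :=
  MultilinearMap.sum_compLinearMap_update_apply _ φ x

end leibniz

section succAbove

variable {R M N : Type*} [CommRing R] [AddCommGroup M] [Module R M] [AddCommGroup N]
  [Module R N] {n : ℕ}

theorem map_basis_comp_eq_zero (f : M [⋀^Fin n]→ₗ[R] N) (b : Module.Basis (Fin (n + 1)) R M)
    {m : Fin (n + 1)} (hf : f (b ∘ m.succAbove) = 0) {v : Fin n → Fin (n + 1)}
    (hv : ∀ k, v k ≠ m) : f (b ∘ v) = 0 := by
  by_cases hinj : Injective v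
  · obtain ⟨e, rfl⟩ := Fin.exists_perm_eq_succAbove_comp hinj hv
    rw [← comp_assoc, f.map_perm, hf, smul_zero]
  · exact f.map_eq_zero_of_not_injective _ fun h ↦ hinj h.of_comp

theorem _root_.Module.Basis.ext_alternating_succAbove_s5 {f g : M [⋀^Fin n]→ₗ[R] N}
    (b : Module.Basis (Fin (n + 1)) R M)
    (h : ∀ m : Fin (n + 1), f (b ∘ m.succAbove) = g (b ∘ m.succAbove)) : f = g := by
  refine b.ext_alternating fun v hv ↦ ?_
  obtain ⟨m, hm⟩ : ∃ m, ∀ k, v k ≠ m := by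
    by_contra! hsurj
    have := Fintype.card_le_of_surjective v hsurj
    simp at this
  obtain ⟨e, rfl⟩ := Fin.exists_perm_eq_succAbove_comp hv hm
  change f ((b ∘ m.succAbove) ∘ e) = g ((b ∘ m.succAbove) ∘ e)
  rw [f.map_perm, g.map_perm, h]

/-- Every basis vector other than `e (m.succAbove i)` and `e m` already occurs among the
remaining arguments. -/
theorem map_update_basis_succAbove (f : M [⋀^Fin n]→ₗ[R] N)
    (b : Module.Basis (Fin (n + 1)) R M) (m : Fin (n + 1)) (i : Fin n) (y : M) :
    f (update (b ∘ m.succAbove) i y) = b.repr y (m.succAbove i) • f (b ∘ m.succAbove) +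
      b.repr y m • f (update (b ∘ m.succAbove) i (b m)) := by
  conv_lhs => rw [← b.sum_repr y, f.map_update_sum]
  rw [Fintype.sum_eq_add _ _ (m.succAbove_ne i)]
  · simp only [f.map_update_smul]
    rw [show b (m.succAbove i) = (b ∘ m.succAbove) i from rfl, update_eq_self]
  rintro k ⟨hk, hkm⟩
  obtain ⟨l, rfl⟩ := Fin.exists_succAbove_eq hkm
  have hli : l ≠ i := fun h ↦ hk (h ▸ rfl)
  rw [f.map_update_smul, f.map_eq_zero_of_eq _ (by simp [update_of_ne hli]) hli.symm, smul_zero]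

end succAbove

end AlternatingMap

section DeltaDerivation

variable {R M ι : Type*} [CommRing R] [AddCommGroup M] [Module R M] [Fintype ι] [DecidableEq ι]

def IsDeltaDerivation (br : M [⋀^ι]→ₗ[R] M) (δ : R) (φ : M →ₗ[R] M) : Prop :=
  ∀ x : ι → M, φ (br x) = δ • ∑ i, br (update x i (φ (x i)))

theorem isDeltaDerivation_iff (br : M [⋀^ι]→ₗ[R] M) (δ : R) (φ : M →ₗ[R] M) :
    IsDeltaDerivation br δ φ ↔ φ.compAlternatingMap br = δ • br.leibnizSum φ := by
  simp only [IsDeltaDerivation, AlternatingMap.ext_iff, LinearMap.compAlternatingMap_apply,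
    AlternatingMap.smul_apply, AlternatingMap.leibnizSum_apply]

end DeltaDerivation

namespace B2

variable {R M : Type*} [CommRing R] [AddCommGroup M] [Module R M] {n : ℕ}
  {b : Module.Basis (Fin (n + 1)) R M} {br : M [⋀^Fin n]→ₗ[R] M}

theorem repr_smul_map_update_eq_zero
    (hbr : ∀ i : Fin (n + 1), br (b ∘ i.succAbove) = if i = Fin.last n then b 0 else 0)
    {φ : M →ₗ[R] M} (hlast : ∀ m ≠ Fin.last n, b.repr (φ (b (Fin.last n))) m = 0)
    (m : Fin (n + 1)) (i : Fin n) :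
    b.repr (φ (b (m.succAbove i))) m • br (update (b ∘ m.succAbove) i (b m)) = 0 := by
  by_cases hi : m.succAbove i = Fin.last n
  · rw [hi, hlast m (hi ▸ m.ne_succAbove i), zero_smul]
  · rw [← comp_update, br.map_basis_comp_eq_zero b ((hbr _).trans (if_neg hi)), smul_zero]
    intro k
    rcases eq_or_ne k i with rfl | hk
    · simp [m.ne_succAbove k]
    · simp [hk]

theorem isDeltaDerivation_of_trace
    (hbr : ∀ i : Fin (n + 1), br (b ∘ i.succAbove) = if i = Fin.last n then b 0 else 0)
    {δ : R} {φ : M →ₗ[R] M} (hlast : ∀ m ≠ Fin.last n, b.repr (φ (b (Fin.last n))) m = 0)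
    (hfirst : φ (b 0) = (δ * ∑ k ∈ univ.erase (Fin.last n), b.repr (φ (b k)) k) • b 0) :
    IsDeltaDerivation br δ φ := by
  rw [isDeltaDerivation_iff]
  refine b.ext_alternating_succAbove_s5 fun m ↦ ?_
  have hterm (i : Fin n) : br (update (b ∘ m.succAbove) i (φ (b (m.succAbove i)))) =
      b.repr (φ (b (m.succAbove i))) (m.succAbove i) • br (b ∘ m.succAbove) := by
    rw [br.map_update_basis_succAbove b m, repr_smul_map_update_eq_zero hbr hlast, add_zero]
  simp only [LinearMap.compAlternatingMap_apply, AlternatingMap.smul_apply,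
    AlternatingMap.leibnizSum_apply, comp_apply, hterm, ← sum_smul, smul_smul]
  have hsum : ∑ i, b.repr (φ (b (m.succAbove i))) (m.succAbove i) =
      ∑ k ∈ univ.erase m, b.repr (φ (b k)) k := by
    have h := Fin.sum_univ_succAbove (fun k ↦ b.repr (φ (b k)) k) m
    rw [← add_sum_erase _ _ (mem_univ m)] at h
    exact (add_left_cancel h).symm
  rw [hsum, hbr]
  split_ifs with hm
  · rw [hm, hfirst]
  · rw [map_zero, smul_zero]

end B2

/-- Type `(B_2)`: the linear map with
`φ(e_1) = (δ/(1-δ))·(Σ_{k=2}^{n} β_{kk})·e_1`, `φ(e_{n+1}) = β_{n+1,n+1} e_{n+1}`,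
`φ(e_i) = Σ_j β_{ij} e_j` for `2 ≤ i ≤ n`, is a `δ`-derivation. -/
theorem B2_map_is_delta_derivation
    {F A : Type*} [Field F] [AddCommGroup A] [Module F A] {n : ℕ} (hn : 2 ≤ n)
    (b : Module.Basis (Fin (n + 1)) F A)
    (br : AlternatingMap F A A (Fin n))
    (hbr : ∀ i : Fin (n + 1),
      br (b ∘ i.succAbove) = if i = Fin.last n then b 0 else 0)
    (δ : F) (hδ : δ ≠ 1) (β : Fin (n + 1) → Fin (n + 1) → F)
    (φ : A →ₗ[F] A)
    (hφ : φ = b.constr F (fun i : Fin (n + 1) =>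
      if i = 0 then
        (δ / (1 - δ) *
          ∑ k ∈ (Finset.univ.erase (0 : Fin (n + 1))).erase (Fin.last n),
            β k k) • b 0
      else if i = Fin.last n then β (Fin.last n) (Fin.last n) • b (Fin.last n)
      else ∑ j, β i j • b j)) :
    ∀ x : Fin n → A,
      φ (br x) = δ • ∑ i, br (Function.update x i (φ (x i))) := by
  have h0_ne_last : (0 : Fin (n + 1)) ≠ Fin.last n := Fin.ext_iff.not.2 (by simp; omega)
  have hφb (j : Fin (n + 1)) := congrArg (· (b j)) hφ
  simp only [Module.Basis.constr_basis] at hφb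
  set S := ∑ k ∈ (univ.erase (0 : Fin (n + 1))).erase (Fin.last n), β k k
  have hdiag (k) (hk : k ∈ (univ.erase (0 : Fin (n + 1))).erase (Fin.last n)) :
      b.repr (φ (b k)) k = β k k := by
    simp only [mem_erase] at hk
    simp [hφb, hk.1, hk.2.1, Finsupp.single_apply]
  have htrace : ∑ k ∈ univ.erase (Fin.last n), b.repr (φ (b k)) k = δ / (1 - δ) * S + S := by
    rw [← add_sum_erase _ _ (mem_erase.2 ⟨h0_ne_last, mem_univ 0⟩), erase_right_comm,
      sum_congr rfl hdiag]
    simp [hφb, S]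
  refine B2.isDeltaDerivation_of_trace hbr (fun m hm ↦ ?_) ?_
  · simp [hφb, h0_ne_last.symm, Ne.symm hm]
  · rw [htrace, hφb, if_pos rfl]
    congr 1
    field_simp [sub_ne_zero.2 hδ.symm]
    ring
end

section
/- Let A be the (n+1)-dimensional n-ary algebra of type (D_r) with r ≤ n over a field F, and φ a δ-derivation with matrix entries β_{ij}. Then β_{ji} = 0 for all i > r and j ≤ r. -/
/-!
Every value of the bracket is, by multilinearity, a combination of brackets of basis vectors;
these vanish when a basis vector repeats and are otherwise `± [e_1, …, ê_m, …, e_{n+1}]`, so the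
bracket takes values in `span {e_m | m ≤ r}`. Applying `φ` to `e_j = [e_1, …, ê_j, …, e_{n+1}]`
for `j ≤ r` and using the δ-derivation rule writes `φ(e_j)` as `δ` times a sum of brackets,
hence `φ(e_j)` has no component along `e_i` for `i > r`.
-/

open Function

theorem Fin.exists_succAbove_comp_perm_eq {n : ℕ} {g : Fin n → Fin (n + 1)} (hg : Injective g) :
    ∃ (m : Fin (n + 1)) (σ : Equiv.Perm (Fin n)), m.succAbove ∘ σ = g := by
  obtain ⟨m, hm⟩ : ∃ m, ∀ k, g k ≠ m := by
    by_contra! hsurj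
    simpa using Fintype.card_le_of_surjective g fun m => (hsurj m).imp fun _ => id
  choose σ hσ using fun k => Fin.exists_succAbove_eq (hm k)
  have hσ_inj : Injective σ := fun a c hac => hg <| by rw [← hσ a, ← hσ c, hac]
  exact ⟨m, Equiv.ofBijective σ (Finite.injective_iff_bijective.mp hσ_inj), funext hσ⟩

namespace AlternatingMap

variable {R M N : Type*} [CommRing R] [AddCommGroup M] [Module R M] [AddCommGroup N] [Module R N]
  {n : ℕ} (f : M [⋀^Fin n]→ₗ[R] N)

theorem map_comp_mem_of_forall_succAbove (v : Fin (n + 1) → M) {p : Submodule R N}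
    (h : ∀ m : Fin (n + 1), f (v ∘ m.succAbove) ∈ p) (g : Fin n → Fin (n + 1)) : f (v ∘ g) ∈ p := by
  by_cases hg : Injective g
  · obtain ⟨m, σ, rfl⟩ := Fin.exists_succAbove_comp_perm_eq hg
    rw [← comp_assoc, f.map_perm]
    exact p.smul_of_tower_mem _ (h m)
  · rw [f.map_eq_zero_of_not_injective _ fun hv => hg hv.of_comp]
    exact p.zero_mem

theorem map_mem_of_forall_basis_comp {ι κ : Type*} [Fintype ι] [Fintype κ]
    (f : M [⋀^κ]→ₗ[R] N) (b : Module.Basis ι R M) {p : Submodule R N}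
    (h : ∀ g : κ → ι, f (b ∘ g) ∈ p) (x : κ → M) : f x ∈ p := by
  classical
  have hx : x = fun k => ∑ t, b.repr (x k) t • b t := funext fun k => (b.sum_repr (x k)).symm
  rw [hx, f.coe_multilinearMap.symm, f.toMultilinearMap.map_sum]
  refine p.sum_mem fun g _ => ?_
  rw [f.coe_multilinearMap, f.map_smul_univ]
  exact p.smul_mem _ (h g)

theorem map_mem_of_forall_succAbove (b : Module.Basis (Fin (n + 1)) R M) {p : Submodule R N}
    (h : ∀ m : Fin (n + 1), f (b ∘ m.succAbove) ∈ p) (x : Fin n → M) : f x ∈ p :=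
  f.map_mem_of_forall_basis_comp b (f.map_comp_mem_of_forall_succAbove b h) x

end AlternatingMap

theorem delta_derivation_Dr_lower_block_zero_general
    {F A : Type*} [Field F] [AddCommGroup A] [Module F A]
    {n r : ℕ}
    (b : Module.Basis (Fin (n + 1)) F A)
    (br : AlternatingMap F A A (Fin n))
    (hbr : ∀ i : Fin (n + 1),
      br (b ∘ i.succAbove) = if (i : ℕ) < r then b i else 0)
    (δ : F)
    (φ : A →ₗ[F] A)
    (hφ : ∀ x : Fin n → A,
      φ (br x) = δ • ∑ i, br (Function.update x i (φ (x i)))) :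
    ∀ i j : Fin (n + 1), r ≤ (i : ℕ) → (j : ℕ) < r →
      b.repr (φ (b j)) i = 0 := by
  intro i j hi hj
  have hbr_mem : ∀ x, br x ∈ LinearMap.ker (b.coord i) := by
    refine br.map_mem_of_forall_succAbove b fun m => ?_
    rw [hbr m]
    split_ifs with hm
    · have hmi : m ≠ i := fun h => by omega
      simp [hmi]
    · exact zero_mem _
  have hφj : φ (b j) = δ • ∑ k, br (update (b ∘ j.succAbove) k (φ (b (j.succAbove k)))) := by
    simpa [hbr j, hj] using hφ (b ∘ j.succAbove)
  change φ (b j) ∈ LinearMap.ker (b.coord i)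
  rw [hφj]
  exact Submodule.smul_mem _ _ (Submodule.sum_mem _ fun k _ => hbr_mem _)

/-- Type `(D_r)` with `r ≤ n`: `β_{ji} = 0` for all `i > r` and `j ≤ r`. -/
theorem delta_derivation_Dr_lower_block_zero
    {F A : Type*} [Field F] [AddCommGroup A] [Module F A]
    {n r : ℕ} (hr3 : 3 ≤ r) (hrn : r ≤ n)
    (b : Module.Basis (Fin (n + 1)) F A)
    (br : AlternatingMap F A A (Fin n))
    (hbr : ∀ i : Fin (n + 1),
      br (b ∘ i.succAbove) = if (i : ℕ) < r then b i else 0)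
    (δ : F)
    (φ : A →ₗ[F] A)
    (hφ : ∀ x : Fin n → A,
      φ (br x) = δ • ∑ i, br (Function.update x i (φ (x i)))) :
    ∀ i j : Fin (n + 1), r ≤ (i : ℕ) → (j : ℕ) < r →
      b.repr (φ (b j)) i = 0 :=
  delta_derivation_Dr_lower_block_zero_general b br hbr δ φ hφ
end

section
/- Let A be an 8-dimensional composition algebra over a field F of characteristic ≠ 2,3, with nondegenerate symmetric bilinear form (x,y) = (1/2)(x·ȳ + y·x̄), and define the ternary operation [x,y,z] = (x·ȳ)·z − (y,z)x + (x,z)y − (x,y)z on A (the ternary Malcev algebra M_8). Then the multiplication [·,·,·] is antisymmetric: it changes sign under transposition of any two arguments. -/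
/-!
The polar identity `x ȳ + y x̄ = 2 (x,y) 1` gives `x̄ = 2 (x,1) 1 - x`, and linearizing the
composition law `N(xz) = N(x) N(z)` shows that right multiplication by `z` is adjoint to right
multiplication by `z̄`. With nondegeneracy this yields `(x ȳ) y = N(y) x`, whose linearization
`(x ȳ) z + (x z̄) y = 2 (y,z) x` is antisymmetry of `[x,y,z]` in its last two arguments, while the
polar identity multiplied on the right by `z` is antisymmetry in the first two. These two
transpositions generate all of them.
-/

section CompositionAlgebra

variable {F A : Type*} [Field F] [NonAssocRing A] [Module F A]
  (conj : A →ₗ[F] A) (form : A →ₗ[F] A →ₗ[F] F)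

def ternaryProduct (x y z : A) : A :=
  (x * conj y) * z - form y z • x + form x z • y - form x y • z

theorem form_comm [Nontrivial A] (h2 : (2 : F) ≠ 0)
    (hform : ∀ x y : A, x * conj y + y * conj x = (2 * form x y) • (1 : A)) (x y : A) :
    form x y = form y x := by
  have h : (2 * form x y) • (1 : A) = (2 * form y x) • (1 : A) := by
    rw [← hform, ← hform, add_comm]
  exact mul_left_cancel₀ h2 (smul_left_injective F one_ne_zero h)

theorem conj_eq_smul_one_sub (hconj1 : conj 1 = 1)
    (hform : ∀ x y : A, x * conj y + y * conj x = (2 * form x y) • (1 : A)) (x : A) :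
    conj x = (2 * form x 1) • (1 : A) - x := by
  have h := hform x 1
  rw [hconj1, mul_one, one_mul] at h
  exact eq_sub_of_add_eq' h

theorem form_one_one [Nontrivial A] (h2 : (2 : F) ≠ 0) (hconj1 : conj 1 = 1)
    (hform : ∀ x y : A, x * conj y + y * conj x = (2 * form x y) • (1 : A)) :
    form (1 : A) 1 = 1 := by
  have h := hform 1 1
  rw [hconj1, mul_one, ← two_smul F (1 : A)] at h
  exact (mul_left_cancel₀ h2 (by simpa using smul_left_injective F one_ne_zero h)).symm

theorem form_mul_right_mul_right (h2 : (2 : F) ≠ 0) (hsymm : ∀ x y : A, form x y = form y x)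
    (hcomp : ∀ x y : A, form (x * y) (x * y) = form x x * form y y) (x y z : A) :
    form (x * z) (y * z) = form x y * form z z := by
  have h := hcomp (x + y) z
  simp only [add_mul, map_add, LinearMap.add_apply] at h
  rw [hsymm (y * z) (x * z), hsymm y x, hcomp x z, hcomp y z] at h
  exact mul_left_cancel₀ h2 (by linear_combination h)

theorem form_mul_mul_add_form_mul_mul (h2 : (2 : F) ≠ 0)
    (hsymm : ∀ x y : A, form x y = form y x)
    (hcomp : ∀ x y : A, form (x * y) (x * y) = form x x * form y y) (x y z w : A) :
    form (x * z) (y * w) + form (x * w) (y * z) = 2 * (form x y * form z w) := by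
  have h := form_mul_right_mul_right form h2 hsymm hcomp x y (z + w)
  simp only [mul_add, map_add, LinearMap.add_apply] at h
  rw [form_mul_right_mul_right form h2 hsymm hcomp x y z,
    form_mul_right_mul_right form h2 hsymm hcomp x y w, hsymm w z] at h
  linear_combination h

theorem form_mul_right_eq_form_mul_conj [SMulCommClass F A A]
    (h2 : (2 : F) ≠ 0) (hconj1 : conj 1 = 1)
    (hform : ∀ x y : A, x * conj y + y * conj x = (2 * form x y) • (1 : A))
    (hsymm : ∀ x y : A, form x y = form y x)
    (hcomp : ∀ x y : A, form (x * y) (x * y) = form x x * form y y) (x y z : A) :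
    form (x * z) y = form x (y * conj z) := by
  have h := form_mul_mul_add_form_mul_mul form h2 hsymm hcomp x y z 1
  rw [mul_one, mul_one] at h
  rw [conj_eq_smul_one_sub conj form hconj1 hform z, mul_sub, mul_smul_comm, mul_one, map_sub,
    map_smul, smul_eq_mul]
  linear_combination h

theorem form_conj_conj [Nontrivial A] (h2 : (2 : F) ≠ 0) (hconj1 : conj 1 = 1)
    (hform : ∀ x y : A, x * conj y + y * conj x = (2 * form x y) • (1 : A))
    (hsymm : ∀ x y : A, form x y = form y x) (y : A) :
    form (conj y) (conj y) = form y y := by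
  rw [conj_eq_smul_one_sub conj form hconj1 hform y]
  simp only [map_sub, map_smul, LinearMap.sub_apply, LinearMap.smul_apply, smul_eq_mul,
    form_one_one conj form h2 hconj1 hform, hsymm (1 : A) y]
  ring

theorem mul_conj_mul_self [SMulCommClass F A A] [Nontrivial A]
    (h2 : (2 : F) ≠ 0) (hconj1 : conj 1 = 1)
    (hform : ∀ x y : A, x * conj y + y * conj x = (2 * form x y) • (1 : A))
    (hnondeg : ∀ x : A, (∀ y : A, form x y = 0) → x = 0)
    (hcomp : ∀ x y : A, form (x * y) (x * y) = form x x * form y y) (x y : A) :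
    (x * conj y) * y = form y y • x := by
  have hsymm := form_comm conj form h2 hform
  refine sub_eq_zero.mp (hnondeg _ fun w => ?_)
  rw [map_sub, map_smul, LinearMap.sub_apply, LinearMap.smul_apply, smul_eq_mul,
    form_mul_right_eq_form_mul_conj conj form h2 hconj1 hform hsymm hcomp,
    form_mul_right_mul_right form h2 hsymm hcomp, form_conj_conj conj form h2 hconj1 hform hsymm]
  ring

theorem mul_conj_mul_add_mul_conj_mul [SMulCommClass F A A] [Nontrivial A]
    (h2 : (2 : F) ≠ 0) (hconj1 : conj 1 = 1)
    (hform : ∀ x y : A, x * conj y + y * conj x = (2 * form x y) • (1 : A))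
    (hnondeg : ∀ x : A, (∀ y : A, form x y = 0) → x = 0)
    (hcomp : ∀ x y : A, form (x * y) (x * y) = form x x * form y y) (x y z : A) :
    (x * conj y) * z + (x * conj z) * y = (2 * form y z) • x := by
  have key := mul_conj_mul_self conj form h2 hconj1 hform hnondeg hcomp
  have h := key x (y + z)
  simp only [map_add, mul_add, add_mul, LinearMap.add_apply] at h
  rw [key x y, key x z, form_comm conj form h2 hform z y] at h
  linear_combination (norm := module) h

theorem ternaryProduct_swap_left [IsScalarTower F A A] [Nontrivial A] (h2 : (2 : F) ≠ 0)
    (hform : ∀ x y : A, x * conj y + y * conj x = (2 * form x y) • (1 : A)) (x y z : A) :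
    ternaryProduct conj form y x z = -ternaryProduct conj form x y z := by
  have h : (x * conj y) * z + (y * conj x) * z = (2 * form x y) • z := by
    rw [← add_mul, hform, smul_mul_assoc, one_mul]
  rw [ternaryProduct, ternaryProduct, form_comm conj form h2 hform y x]
  linear_combination (norm := module) h

theorem ternaryProduct_swap_right [SMulCommClass F A A] [Nontrivial A]
    (h2 : (2 : F) ≠ 0) (hconj1 : conj 1 = 1)
    (hform : ∀ x y : A, x * conj y + y * conj x = (2 * form x y) • (1 : A))
    (hnondeg : ∀ x : A, (∀ y : A, form x y = 0) → x = 0)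
    (hcomp : ∀ x y : A, form (x * y) (x * y) = form x x * form y y) (x y z : A) :
    ternaryProduct conj form x z y = -ternaryProduct conj form x y z := by
  rw [ternaryProduct, ternaryProduct, form_comm conj form h2 hform z y]
  linear_combination (norm := module)
    mul_conj_mul_add_mul_conj_mul conj form h2 hconj1 hform hnondeg hcomp x y z

end CompositionAlgebra

theorem M8_ternary_product_antisymmetric_general
    {F A : Type*} [Field F] [NonAssocRing A] [Module F A]
    [SMulCommClass F A A] [IsScalarTower F A A]
    (h2 : (2 : F) ≠ 0)
    (conj : A →ₗ[F] A)
    (hconj1 : conj 1 = 1)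
    (form : A →ₗ[F] A →ₗ[F] F)
    (hform : ∀ x y : A, x * conj y + y * conj x = (2 * form x y) • (1 : A))
    (hnondeg : ∀ x : A, (∀ y : A, form x y = 0) → x = 0)
    (hcomp : ∀ x y : A, form (x * y) (x * y) = form x x * form y y)
    (T : A → A → A → A)
    (hT : ∀ x y z : A,
      T x y z = (x * conj y) * z - form y z • x + form x z • y - form x y • z) :
    (∀ x y z : A, T y x z = - T x y z) ∧
    (∀ x y z : A, T x z y = - T x y z) ∧
    (∀ x y z : A, T z y x = - T x y z) := by
  rcases subsingleton_or_nontrivial A with hA | hA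
  · exact ⟨fun _ _ _ => Subsingleton.elim _ _, fun _ _ _ => Subsingleton.elim _ _,
      fun _ _ _ => Subsingleton.elim _ _⟩
  obtain rfl : T = ternaryProduct conj form := funext₃ hT
  have swap_left := ternaryProduct_swap_left conj form h2 hform
  have swap_right := ternaryProduct_swap_right conj form h2 hconj1 hform hnondeg hcomp
  refine ⟨swap_left, swap_right, fun x y z => ?_⟩
  rw [swap_left y z x, swap_right y x z, swap_left x y z, neg_neg]

/-- On an 8-dimensional composition algebra `A` (char `F` ≠ 2,3) with involution
`conj`, bilinear form `(x,y) = (1/2)(x·ȳ + y·x̄)` and ternary product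
`[x,y,z] = (x ȳ) z − (y,z)x + (x,z)y − (x,y)z`, the ternary multiplication is
antisymmetric: it changes sign under transposition of any two arguments. -/
theorem M8_ternary_product_antisymmetric
    {F A : Type*} [Field F] [NonAssocRing A] [Module F A]
    [SMulCommClass F A A] [IsScalarTower F A A]
    (h2 : (2 : F) ≠ 0) (h3 : (3 : F) ≠ 0)
    (conj : A →ₗ[F] A)
    (hconj1 : conj 1 = 1)
    (hconjinv : ∀ x : A, conj (conj x) = x)
    (hconjmul : ∀ x y : A, conj (x * y) = conj y * conj x)
    (form : A →ₗ[F] A →ₗ[F] F)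
    (hform : ∀ x y : A, x * conj y + y * conj x = (2 * form x y) • (1 : A))
    (hnondeg : ∀ x : A, (∀ y : A, form x y = 0) → x = 0)
    (hcomp : ∀ x y : A, form (x * y) (x * y) = form x x * form y y)
    (hdim : Module.finrank F A = 8)
    (T : A → A → A → A)
    (hT : ∀ x y z : A,
      T x y z = (x * conj y) * z - form y z • x + form x z • y - form x y • z) :
    (∀ x y z : A, T y x z = - T x y z) ∧
    (∀ x y z : A, T x z y = - T x y z) ∧
    (∀ x y z : A, T z y x = - T x y z) :=
  M8_ternary_product_antisymmetric_general h2 conj hconj1 form hform hnondeg hcomp T hT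
end
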